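/- arXiv:0911.3923 — 4 statements merged into one kernel-verified Lean document; each statement's English description precedes it below -/
import Mathlib

section
/- Let V be a nonempty type, let G be a simple graph on V, and let a group Γ act on V preserving adjacency (for all γ ∈ Γ and all vertices u, v, if u and v are adjacent in G then γ·u and γ·v are adjacent in G). Suppose that a subset S of Γ generates Γ, that the action of Γ on V is transitive, and that there exists a vertex v₀ such that for every s ∈ S either s·v₀ = v₀ or s·v₀ is adjacent to v₀ in G. Then G is connected. -/
namespace SimpleGraph

variable {V Γ : Type*} [Group Γ] [MulAction Γ V] {G : SimpleGraph V}

theorem Reachable.smul (hadj : ∀ (γ : Γ) (u v : V), G.Adj u v → G.Adj (γ • u) (γ • v))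
    (γ : Γ) {u v : V} (h : G.Reachable u v) : G.Reachable (γ • u) (γ • v) :=
  h.map ⟨(γ • ·), hadj γ _ _⟩

/-- The elements `γ` with `γ • v₀` reachable from `v₀` form a subgroup, which contains `S`. -/
theorem reachable_smul_of_mem_closure
    (hadj : ∀ (γ : Γ) (u v : V), G.Adj u v → G.Adj (γ • u) (γ • v))
    {S : Set Γ} {v₀ : V} (hv₀ : ∀ s ∈ S, s • v₀ = v₀ ∨ G.Adj (s • v₀) v₀)
    {γ : Γ} (hγ : γ ∈ Subgroup.closure S) : G.Reachable (γ • v₀) v₀ := by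
  induction hγ using Subgroup.closure_induction with
  | mem s hs =>
    rcases hv₀ s hs with hfix | hadj₀
    · rw [hfix]
    · exact hadj₀.reachable
  | one => rw [one_smul]
  | mul a b _ _ ha hb => simpa only [smul_smul] using (hb.smul hadj a).trans ha
  | inv a _ ha => simpa only [inv_smul_smul] using (ha.symm.smul hadj a⁻¹)

end SimpleGraph

theorem putman_connectivity_general {V : Type*} (G : SimpleGraph V)
    {Γ : Type*} [Group Γ] [MulAction Γ V]
    (hadj : ∀ (γ : Γ) (u v : V), G.Adj u v → G.Adj (γ • u) (γ • v))
    (S : Set Γ) (hgen : Subgroup.closure S = ⊤)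
    (htrans : ∀ u v : V, ∃ γ : Γ, γ • u = v)
    (v₀ : V) (hv₀ : ∀ s ∈ S, s • v₀ = v₀ ∨ G.Adj (s • v₀) v₀) :
    G.Connected := by
  refine G.connected_iff_exists_forall_reachable.2 ⟨v₀, fun u => ?_⟩
  obtain ⟨γ, rfl⟩ := htrans v₀ u
  exact (G.reachable_smul_of_mem_closure hadj hv₀ (hgen ▸ Subgroup.mem_top γ)).symm

/-- Putman's connectivity criterion: if a group `Γ` acts on the vertices of a simple
graph `G` preserving adjacency, the action is transitive, `S` generates `Γ`, and there
is a base vertex `v₀` such that every `s ∈ S` either fixes `v₀` or moves it to an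
adjacent vertex, then `G` is connected. -/
theorem putman_connectivity {V : Type*} [Nonempty V] (G : SimpleGraph V)
    {Γ : Type*} [Group Γ] [MulAction Γ V]
    (hadj : ∀ (γ : Γ) (u v : V), G.Adj u v → G.Adj (γ • u) (γ • v))
    (S : Set Γ) (hgen : Subgroup.closure S = ⊤)
    (htrans : ∀ u v : V, ∃ γ : Γ, γ • u = v)
    (v₀ : V) (hv₀ : ∀ s ∈ S, s • v₀ = v₀ ∨ G.Adj (s • v₀) v₀) :
    G.Connected :=
  putman_connectivity_general G hadj S hgen htrans v₀ hv₀
end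

section
/- Let G be a simple graph on a vertex type V and let n be a natural number. Assume: (i) every vertex of G is contained in some triangle of G; (ii) for every pair of adjacent vertices a, b of G, the set of triangles of G containing both a and b is finite with exactly n elements; (iii) any two triangles of G are chain-connected in G. Then every injective graph homomorphism from G to itself is surjective. -/
/-!
An injective homomorphism `f` maps the triangles through an edge `ab` injectively into the
triangles through the edge `f a f b`. Both families have exactly `n` members, so every triangle
through `f a f b` is the image of a triangle. Hence the set of image triangles is closed under
passing to a triangle that shares an edge, and by chain-connectedness it contains every triangle,
in particular one through any given vertex.
-/

/-- Two triangles `s, t` of a simple graph `G` are chain-connected in `G` if there is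
a finite sequence of triangles from `s` to `t` in which consecutive triangles meet
along an edge of `G`. -/
def ChainConnected {V : Type*} [DecidableEq V] (G : SimpleGraph V)
    (s t : Finset V) : Prop :=
  ∃ (m : ℕ) (c : Fin (m + 1) → Finset V),
    c 0 = s ∧ c (Fin.last m) = t ∧ (∀ i, G.IsNClique 3 (c i)) ∧
    ∀ i : Fin m, ∃ x y : V, G.Adj x y ∧ c i.castSucc ∩ c i.succ = {x, y}


theorem ChainConnected.propagate {V : Type*} [DecidableEq V] {G : SimpleGraph V}
    {P : Finset V → Prop}
    (hP : ∀ s t x y, G.IsNClique 3 s → G.IsNClique 3 t → G.Adj x y → s ∩ t = {x, y} →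
      P s → P t)
    {s t : Finset V} (h : ChainConnected G s t) (hs : P s) : P t := by
  obtain ⟨m, c, rfl, rfl, hc, hstep⟩ := h
  suffices ∀ i, P (c i) from this (Fin.last m)
  intro i
  induction i using Fin.induction with
  | zero => exact hs
  | succ i ih =>
    obtain ⟨x, y, hxy, hint⟩ := hstep i
    exact hP _ _ x y (hc _) (hc _) hxy hint ih

namespace SimpleGraph

variable {V W : Type*} {G : SimpleGraph V} {H : SimpleGraph W}

def edgeTriangles (G : SimpleGraph V) (a b : V) : Set (Finset V) :=
  {t | G.IsNClique 3 t ∧ a ∈ t ∧ b ∈ t}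

namespace Copy

theorem isNClique_map (f : Copy G H) {n : ℕ} {s : Finset V} (hs : G.IsNClique n s) :
    H.IsNClique n (s.map f.toEmbedding) :=
  hs.map.mono <| (map_le_iff_le_comap _ _ _).mpr fun _ _ ↦ f.toHom.map_adj

theorem image_edgeTriangles_subset (f : Copy G H) (a b : V) :
    Finset.map f.toEmbedding '' G.edgeTriangles a b ⊆ H.edgeTriangles (f a) (f b) := by
  rintro _ ⟨t, ⟨ht, ha, hb⟩, rfl⟩
  exact ⟨f.isNClique_map ht, Finset.mem_map_of_mem _ ha, Finset.mem_map_of_mem _ hb⟩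

theorem image_edgeTriangles_eq (f : Copy G H) {a b : V}
    (hfin : (H.edgeTriangles (f a) (f b)).Finite)
    (hcard : (H.edgeTriangles (f a) (f b)).ncard ≤ (G.edgeTriangles a b).ncard) :
    Finset.map f.toEmbedding '' G.edgeTriangles a b = H.edgeTriangles (f a) (f b) := by
  refine Set.eq_of_subset_of_ncard_le (f.image_edgeTriangles_subset a b) ?_ hfin
  rwa [Set.ncard_image_of_injective _ (Finset.map_injective _)]

theorem exists_map_eq_of_inter_eq_edge [DecidableEq W] (f : Copy G H)
    (hcount : ∀ a b, G.Adj a b → (H.edgeTriangles (f a) (f b)).Finite ∧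
      (H.edgeTriangles (f a) (f b)).ncard ≤ (G.edgeTriangles a b).ncard)
    {s : Finset V} (hs : G.IsNClique 3 s) {t : Finset W} (ht : H.IsNClique 3 t)
    {x y : W} (hxy : H.Adj x y) (hst : s.map f.toEmbedding ∩ t = {x, y}) :
    ∃ s', G.IsNClique 3 s' ∧ s'.map f.toEmbedding = t := by
  have hx : x ∈ s.map f.toEmbedding ∩ t := by simp [hst]
  have hy : y ∈ s.map f.toEmbedding ∩ t := by simp [hst]
  obtain ⟨a, ha, rfl⟩ := Finset.mem_map.mp (Finset.mem_inter.mp hx).1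
  obtain ⟨b, hb, rfl⟩ := Finset.mem_map.mp (Finset.mem_inter.mp hy).1
  have hab : G.Adj a b := hs.isClique ha hb fun h ↦ hxy.ne (congrArg f h)
  have htri : t ∈ H.edgeTriangles (f a) (f b) :=
    ⟨ht, (Finset.mem_inter.mp hx).2, (Finset.mem_inter.mp hy).2⟩
  rw [← f.image_edgeTriangles_eq (hcount a b hab).1 (hcount a b hab).2] at htri
  obtain ⟨s', hs', rfl⟩ := htri
  exact ⟨s', hs'.1, rfl⟩

theorem exists_map_eq_of_chainConnected [DecidableEq W] (f : Copy G H)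
    (hcount : ∀ a b, G.Adj a b → (H.edgeTriangles (f a) (f b)).Finite ∧
      (H.edgeTriangles (f a) (f b)).ncard ≤ (G.edgeTriangles a b).ncard)
    {s : Finset V} (hs : G.IsNClique 3 s) {t : Finset W}
    (hst : ChainConnected H (s.map f.toEmbedding) t) :
    ∃ s', G.IsNClique 3 s' ∧ s'.map f.toEmbedding = t :=
  hst.propagate (P := fun t ↦ ∃ s', G.IsNClique 3 s' ∧ s'.map f.toEmbedding = t)
    (fun _ _ _ _ _ ht hxy hst ⟨_, hs, hmap⟩ ↦
      f.exists_map_eq_of_inter_eq_edge hcount hs ht hxy (hmap ▸ hst))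
    ⟨s, hs, rfl⟩

end Copy

end SimpleGraph

/-- If every vertex of `G` lies in a triangle, every edge of `G` lies in exactly `n`
triangles, and any two triangles of `G` are chain-connected, then every injective
graph homomorphism from `G` to itself is surjective. -/
theorem injective_hom_surjective_of_triangles {V : Type*} [DecidableEq V]
    (G : SimpleGraph V) (n : ℕ)
    (h₁ : ∀ v : V, ∃ t : Finset V, G.IsNClique 3 t ∧ v ∈ t)
    (h₂ : ∀ a b : V, G.Adj a b →
      {t : Finset V | G.IsNClique 3 t ∧ a ∈ t ∧ b ∈ t}.Finite ∧
      {t : Finset V | G.IsNClique 3 t ∧ a ∈ t ∧ b ∈ t}.ncard = n)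
    (h₃ : ∀ s t : Finset V, G.IsNClique 3 s → G.IsNClique 3 t →
      ChainConnected G s t)
    (f : V → V) (hhom : ∀ a b : V, G.Adj a b → G.Adj (f a) (f b))
    (hinj : Function.Injective f) :
    Function.Surjective f := by
  let φ : SimpleGraph.Copy G G := ⟨⟨f, hhom _ _⟩, hinj⟩
  have hcount : ∀ a b, G.Adj a b → (G.edgeTriangles (φ a) (φ b)).Finite ∧
      (G.edgeTriangles (φ a) (φ b)).ncard ≤ (G.edgeTriangles a b).ncard := fun a b hab ↦
    ⟨(h₂ _ _ (hhom a b hab)).1, ((h₂ _ _ (hhom a b hab)).2.trans (h₂ a b hab).2.symm).le⟩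
  intro v
  obtain ⟨t, ht, hvt⟩ := h₁ v
  obtain ⟨s, -, rfl⟩ :=
    φ.exists_map_eq_of_chainConnected hcount ht (h₃ _ t (φ.isNClique_map ht) ht)
  obtain ⟨a, -, rfl⟩ := Finset.mem_map.mp hvt
  exact ⟨a, rfl⟩
end

section
/- Let G and H be simple graphs and let π be a graph homomorphism from G to H that is surjective on vertices. Assume that H is connected and has at least two vertices, and that for every pair of adjacent vertices b, c of H, the subgraph of G induced on π⁻¹({b, c}) (all vertices of G mapping to b or to c) is connected. Then G is connected. -/
/-!
Walk along a path of `H` between the images of two vertices of `G`. Consecutive vertices of the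
path span an edge of `H`, and the preimage of that edge is connected, so any two vertices of `G`
lying over consecutive vertices are joined in `G`; surjectivity supplies a vertex of `G` over each
intermediate vertex to chain these together. Two vertices over the same vertex `b` are joined
inside the preimage of any edge at `b`, which exists because `H` is connected with at least two
vertices.
-/

namespace SimpleGraph

variable {V W : Type*} {G : SimpleGraph V} {H : SimpleGraph W}

theorem Reachable.of_induce {s : Set V} {u v : s} (h : (G.induce s).Reachable u v) :
    G.Reachable u v := by
  simpa using h.map (Embedding.induce s).toHom

section Fibers

variable {π : V → W}
  (hfib : ∀ b c, H.Adj b c → (G.induce {v | π v = b ∨ π v = c}).Preconnected)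
include hfib

theorem reachable_of_mem_preimage_adj {b c : W} (hbc : H.Adj b c) {u v : V}
    (hu : π u = b ∨ π u = c) (hv : π v = b ∨ π v = c) : G.Reachable u v :=
  (hfib b c hbc ⟨u, hu⟩ ⟨v, hv⟩).of_induce

theorem reachable_of_reachable_image (hsurj : Function.Surjective π)
    (hnbr : ∀ b, ∃ c, H.Adj b c) {u v : V} (h : H.Reachable (π u) (π v)) :
    G.Reachable u v := by
  suffices ∀ c, H.Reachable (π u) c → ∀ v, π v = c → G.Reachable u v from this _ h v rfl
  intro c hc
  induction (reachable_iff_reflTransGen _ _).mp hc with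
  | refl =>
    intro v hv
    obtain ⟨c, hbc⟩ := hnbr (π u)
    exact reachable_of_mem_preimage_adj hfib hbc (.inl rfl) (.inl hv)
  | @tail b c hb hbc ih =>
    intro v hv
    obtain ⟨w, hw⟩ := hsurj b
    exact (ih ((reachable_iff_reflTransGen _ _).mpr hb) w hw).trans
      (reachable_of_mem_preimage_adj hfib hbc (.inl hw) (.inr hv))

theorem preconnected_of_preimage_adj_preconnected [Nontrivial W] (hsurj : Function.Surjective π)
    (hH : H.Preconnected) : G.Preconnected := fun u v =>
  reachable_of_reachable_image hfib hsurj hH.exists_adj_of_nontrivial (hH (π u) (π v))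

end Fibers

end SimpleGraph

theorem connected_of_fiber_connected_general {V W : Type*} (G : SimpleGraph V)
    (H : SimpleGraph W) (π : V → W)
    (hsurj : Function.Surjective π)
    (hH : H.Connected) (hW : ∃ w₁ w₂ : W, w₁ ≠ w₂)
    (hfib : ∀ b c : W, H.Adj b c →
      (SimpleGraph.induce {v : V | π v = b ∨ π v = c} G).Connected) :
    G.Connected := by
  obtain ⟨w₁, w₂, hne⟩ := hW
  have : Nontrivial W := nontrivial_of_ne w₁ w₂ hne
  have : Nonempty V := hsurj.nonempty
  exact ⟨SimpleGraph.preconnected_of_preimage_adj_preconnected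
    (fun b c hbc => (hfib b c hbc).preconnected) hsurj hH.preconnected⟩

/-- If `π` is a vertex-surjective graph homomorphism from `G` to a connected graph
`H` with at least two vertices, and the subgraph of `G` induced on the preimage of
each edge of `H` is connected, then `G` is connected. -/
theorem connected_of_fiber_connected {V W : Type*} (G : SimpleGraph V)
    (H : SimpleGraph W) (π : V → W)
    (hhom : ∀ a b : V, G.Adj a b → H.Adj (π a) (π b))
    (hsurj : Function.Surjective π)
    (hH : H.Connected) (hW : ∃ w₁ w₂ : W, w₁ ≠ w₂)
    (hfib : ∀ b c : W, H.Adj b c →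
      (SimpleGraph.induce {v : V | π v = b ∨ π v = c} G).Connected) :
    G.Connected :=
  connected_of_fiber_connected_general G H π hsurj hH hW hfib
end

section
/- The Farey graph F is connected. -/
/-- A coprime pair of integers, representing a vertex of the Farey graph. -/
def FareyPair : Type := {p : ℤ × ℤ // IsCoprime p.1 p.2}

/-- The equivalence identifying a coprime pair with its negation. -/
def fareySetoid : Setoid FareyPair where
  r x y := x.val = y.val ∨ x.val = -y.val
  iseqv := by
    refine ⟨fun x => Or.inl rfl, ?_, ?_⟩
    · rintro x y (h | h)
      · exact Or.inl h.symm
      · exact Or.inr (by rw [h, neg_neg])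
    · rintro x y z (h1 | h1) (h2 | h2)
      · exact Or.inl (h1.trans h2)
      · exact Or.inr (by rw [h1, h2])
      · exact Or.inr (by rw [h1, h2])
      · exact Or.inl (by rw [h1, h2, neg_neg])

/-- A vertex of the Farey graph: a coprime pair of integers up to simultaneous
negation. -/
def FareyVertex : Type := Quotient fareySetoid

/-- The vertex `[p:q]` of the Farey graph. -/
def fareyMk (p q : ℤ) (h : IsCoprime p q) : FareyVertex :=
  Quotient.mk fareySetoid ⟨(p, q), h⟩

/-- The determinant `p * s - q * r` of two pairs `(p, q)` and `(r, s)`. -/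
def fareyDet (x y : FareyPair) : ℤ := x.val.1 * y.val.2 - x.val.2 * y.val.1

private lemma farey_abs_helper (a b : ℤ) (h : a = b ∨ a = -b) :
    (|a| = 1) = (|b| = 1) := by
  rcases h with h | h <;> (rw [h]; try simp)

/-- The Farey graph: vertices `[p:q]` and `[r:s]` are adjacent iff `|ps - qr| = 1`. -/
def FareyGraph : SimpleGraph FareyVertex where
  Adj := Quotient.lift₂ (fun x y => |fareyDet x y| = 1) (by
    rintro x y x' y' (h1 | h1) (h2 | h2) <;> apply farey_abs_helper
    · exact Or.inl (by simp only [fareyDet, h1, h2])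
    · refine Or.inr ?_
      simp only [fareyDet, h1, h2, Prod.fst_neg, Prod.snd_neg]
      ring
    · refine Or.inr ?_
      simp only [fareyDet, h1, h2, Prod.fst_neg, Prod.snd_neg]
      ring
    · refine Or.inl ?_
      simp only [fareyDet, h1, h2, Prod.fst_neg, Prod.snd_neg]
      ring)
  symm := by
    refine ⟨fun u v => ?_⟩
    refine Quotient.inductionOn₂ u v ?_
    intro x y h
    change |fareyDet x y| = 1 at h
    change |fareyDet y x| = 1
    rw [show fareyDet y x = -fareyDet x y from by simp only [fareyDet]; ring,
      abs_neg]
    exact h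
  loopless := by
    refine ⟨fun u => ?_⟩
    refine Quotient.inductionOn u ?_
    intro x h
    change |fareyDet x x| = 1 at h
    rw [show fareyDet x x = 0 from by simp only [fareyDet]; ring] at h
    simp at h

noncomputable instance : DecidableEq FareyVertex := Classical.decEq _


/-!
Every vertex `[p:q]` with `q ≠ 0` has a neighbour `[r:t]` with `|t| < |q|`, obtained by reducing
a Bézout coefficient of `p, q` modulo `q`; this is one step of the Euclidean algorithm. Descending
in `|q|` therefore joins every vertex to `[1:0]`, the only vertex with `q = 0`.
-/

def fareyInfinity : FareyVertex := fareyMk 1 0 isCoprime_one_left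

lemma mk_eq_fareyInfinity_of_snd_eq_zero (x : FareyPair) (hx : x.val.2 = 0) :
    Quotient.mk fareySetoid x = fareyInfinity := by
  obtain ⟨⟨p, q⟩, hpq⟩ := x
  obtain rfl : q = 0 := hx
  apply Quotient.sound
  rcases Int.isUnit_iff.mp (isCoprime_zero_right.mp hpq) with rfl | rfl
  · exact Or.inl rfl
  · exact Or.inr rfl

lemma exists_det_eq_one_of_isCoprime {p q : ℤ} (hpq : IsCoprime p q) (hq : q ≠ 0) :
    ∃ r t : ℤ, p * t - q * r = 1 ∧ t.natAbs < q.natAbs := by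
  obtain ⟨a, b, hab⟩ := hpq
  refine ⟨-b - p * (a / q), a % q, ?_, ?_⟩
  · rw [Int.emod_def]
    linear_combination hab
  · have := Int.emod_nonneg a hq
    have := Int.emod_lt a hq
    omega

lemma exists_adj_natAbs_snd_lt (x : FareyPair) (hx : x.val.2 ≠ 0) :
    ∃ y : FareyPair, y.val.2.natAbs < x.val.2.natAbs ∧
      FareyGraph.Adj (Quotient.mk fareySetoid y) (Quotient.mk fareySetoid x) := by
  obtain ⟨r, t, hdet, hlt⟩ := exists_det_eq_one_of_isCoprime x.property hx
  refine ⟨⟨(r, t), -x.val.2, x.val.1, by linear_combination hdet⟩, hlt, ?_⟩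
  show |r * x.val.2 - t * x.val.1| = 1
  rw [show r * x.val.2 - t * x.val.1 = -1 by linear_combination -hdet, abs_neg, abs_one]

lemma fareyInfinity_reachable_mk (x : FareyPair) :
    FareyGraph.Reachable fareyInfinity (Quotient.mk fareySetoid x) := by
  induction hn : x.val.2.natAbs using Nat.strong_induction_on generalizing x with
  | _ n ih =>
    by_cases hx : x.val.2 = 0
    · rw [mk_eq_fareyInfinity_of_snd_eq_zero x hx]
    · obtain ⟨y, hlt, hadj⟩ := exists_adj_natAbs_snd_lt x hx
      exact (ih _ (hn ▸ hlt) y rfl).trans hadj.reachable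

/-- The Farey graph is connected. -/
theorem fareyGraph_connected : FareyGraph.Connected :=
  (SimpleGraph.connected_iff_exists_forall_reachable _).mpr
    ⟨fareyInfinity, Quotient.ind fareyInfinity_reachable_mk⟩
end
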